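/- If after inserting edge (u,v) (with c_old = core(u,G) ≤ core(v,G)), every node w in the candidate set V_c satisfies cnt(w) ≥ c_old + 1 (counted in G after updating cnt for the new edge but with old core numbers), then every node in V_c has its core number increased by 1, i.e., V_c* = V_c. -/
import Mathlib


variable {V : Type*} [Fintype V]

/-- The k-core of `G`, as the set of vertices contained in some subgraph
(vertex set) in which every vertex has at least `k` neighbors inside the set. -/
def coreSet (G : SimpleGraph V) (k : ℕ) : Set V :=
  {v | ∃ S : Set V, v ∈ S ∧ ∀ u ∈ S, k ≤ (S ∩ G.neighborSet u).ncard}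

/-- The core number of `v`: the largest `k` such that `v` belongs to the `k`-core. -/
noncomputable def coreNumber (G : SimpleGraph V) (v : V) : ℕ :=
  sSup {k | v ∈ coreSet G k}

lemma mem_coreSet_of_le {G : SimpleGraph V} {j k : ℕ} (h : j ≤ k) {v : V}
    (hv : v ∈ coreSet G k) : v ∈ coreSet G j := by
  obtain ⟨S, hvS, hS⟩ := hv
  exact ⟨S, hvS, fun u hu => h.trans (hS u hu)⟩

lemma bddAbove_coreSet (G : SimpleGraph V) (v : V) :
    BddAbove {k | v ∈ coreSet G k} := by
  refine ⟨Fintype.card V, fun k hk => ?_⟩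
  obtain ⟨S, hvS, hS⟩ := hk
  calc k ≤ (S ∩ G.neighborSet v).ncard := hS v hvS
    _ ≤ (Set.univ : Set V).ncard := Set.ncard_le_ncard (Set.subset_univ _) (Set.toFinite _)
    _ = Fintype.card V := by simp [Set.ncard_univ]

lemma mem_coreSet_iff {G : SimpleGraph V} {k : ℕ} {v : V} :
    v ∈ coreSet G k ↔ k ≤ coreNumber G v := by
  constructor
  · intro h
    exact le_csSup (bddAbove_coreSet G v) h
  · intro h
    have hne : {k | v ∈ coreSet G k}.Nonempty :=
      ⟨0, Set.univ, Set.mem_univ v, fun u _ => Nat.zero_le _⟩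
    have hmem := Nat.sSup_mem hne (bddAbove_coreSet G v)
    exact mem_coreSet_of_le h hmem

lemma nbr_sup_subset (G : SimpleGraph V) (u v x : V) :
    ∃ z, (G ⊔ SimpleGraph.fromEdgeSet {s(u, v)}).neighborSet x ⊆
      insert z (G.neighborSet x) := by
  by_cases hxu : x = u
  · refine ⟨v, fun y hy => ?_⟩
    simp only [SimpleGraph.mem_neighborSet, SimpleGraph.sup_adj,
      SimpleGraph.fromEdgeSet_adj, Set.mem_singleton_iff, Sym2.eq_iff] at hy
    rcases hy with h | ⟨(⟨hxu', hyv⟩ | ⟨hxv, hyu⟩), hne⟩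
    · exact Set.mem_insert_of_mem _ h
    · subst hyv; exact Set.mem_insert _ _
    · have : u = v := hxu ▸ hxv
      subst hyu; rw [this]; exact Set.mem_insert _ _
  · refine ⟨u, fun y hy => ?_⟩
    simp only [SimpleGraph.mem_neighborSet, SimpleGraph.sup_adj,
      SimpleGraph.fromEdgeSet_adj, Set.mem_singleton_iff, Sym2.eq_iff] at hy
    rcases hy with h | ⟨(⟨hxu', hyv⟩ | ⟨hxv, hyu⟩), hne⟩
    · exact Set.mem_insert_of_mem _ h
    · exact absurd hxu' hxu
    · subst hyu; exact Set.mem_insert _ _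

lemma coreNumber_sup_le (G : SimpleGraph V) (u v w : V) :
    coreNumber (G ⊔ SimpleGraph.fromEdgeSet {s(u, v)}) w ≤ coreNumber G w + 1 := by
  apply csSup_le'
  intro k hk
  obtain ⟨S, hwS, hS⟩ := hk
  have hcore : k - 1 ≤ coreNumber G w := by
    rw [← mem_coreSet_iff]
    refine ⟨S, hwS, fun x hx => ?_⟩
    have h1 := hS x hx
    obtain ⟨z, hz⟩ := nbr_sup_subset G u v x
    have h2 : (S ∩ (G ⊔ SimpleGraph.fromEdgeSet {s(u, v)}).neighborSet x).ncard
        ≤ (S ∩ G.neighborSet x).ncard + 1 := by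
      calc (S ∩ (G ⊔ SimpleGraph.fromEdgeSet {s(u, v)}).neighborSet x).ncard
          ≤ (insert z (S ∩ G.neighborSet x)).ncard := by
            refine Set.ncard_le_ncard ?_ (Set.toFinite _)
            rintro y ⟨hyS, hyN⟩
            rcases Set.mem_insert_iff.mp (hz hyN) with h | h
            · exact h ▸ Set.mem_insert _ _
            · exact Set.mem_insert_of_mem _ ⟨hyS, h⟩
        _ ≤ (S ∩ G.neighborSet x).ncard + 1 := Set.ncard_insert_le _ _
    omega
  omega

theorem stmt15 (G : SimpleGraph V) (u v : V) (huv : u ≠ v) (hnadj : ¬ G.Adj u v)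
    (hle : coreNumber G u ≤ coreNumber G v)
    (G' : SimpleGraph V) (hG' : G' = G ⊔ SimpleGraph.fromEdgeSet {s(u, v)})
    (Vc : Set V)
    (hVc : Vc = {w | Relation.ReflTransGen
      (fun a b => G'.Adj a b ∧ coreNumber G a = coreNumber G u ∧ coreNumber G b = coreNumber G u)
      u w})
    (Vcs : Set V) (hVcs : Vcs = {w ∈ Vc | coreNumber G' w = coreNumber G u + 1}) :
    (∀ w ∈ Vc,
      coreNumber G u + 1 ≤ {x ∈ G'.neighborSet w | coreNumber G u ≤ coreNumber G x}.ncard) →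
    Vcs = Vc := by
  intro hcnt
  set c := coreNumber G u with hc
  -- every vertex of Vc has old core number c
  have hcore : ∀ w ∈ Vc, coreNumber G w = c := by
    intro w hw
    rw [hVc] at hw
    simp only [Set.mem_setOf_eq] at hw
    induction hw with
    | refl => rfl
    | tail _ h _ => exact h.2.2
  -- lower bound
  have key : ∀ w ∈ Vc, c + 1 ≤ coreNumber G' w := by
    intro w hw
    rw [← mem_coreSet_iff]
    refine ⟨Vc ∪ {x | c + 1 ≤ coreNumber G x}, Or.inl hw, ?_⟩
    rintro x (hx | hx)
    · refine le_trans (hcnt x hx) (Set.ncard_le_ncard ?_ (Set.toFinite _))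
      rintro y ⟨hyN, hyc⟩
      refine ⟨?_, hyN⟩
      rcases eq_or_lt_of_le hyc with h | h
      · left
        rw [hVc] at hx ⊢
        exact Relation.ReflTransGen.tail hx ⟨hyN, hcore x (by rwa [hVc]), h.symm⟩
      · right; exact h
    · simp only [Set.mem_setOf_eq] at hx
      obtain ⟨S, hxS, hS⟩ := mem_coreSet_iff.mpr hx
      refine le_trans (hS x hxS) (Set.ncard_le_ncard ?_ (Set.toFinite _))
      rintro y ⟨hyS, hyN⟩
      refine ⟨Or.inr (mem_coreSet_iff.mp ⟨S, hyS, hS⟩), ?_⟩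
      rw [hG']
      simp only [SimpleGraph.mem_neighborSet, SimpleGraph.sup_adj]
      exact Or.inl hyN
  -- conclude
  rw [hVcs]
  ext w
  simp only [Set.mem_setOf_eq]
  constructor
  · rintro ⟨h, _⟩; exact h
  · intro hw
    refine ⟨hw, le_antisymm ?_ (key w hw)⟩
    calc coreNumber G' w ≤ coreNumber G w + 1 := by
          rw [hG']; exact coreNumber_sup_le G u v w
      _ = c + 1 := by rw [hcore w hw]
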